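/- For every k > 0 with k_p = c_p k > 1 and every γ ∈ ℝ^d with |γ| ≤ k_p, the Fourier coefficient of the trace of the strength satisfies |(Tr σ)^(γ)| ≤ (2d c_p^{m−d−2}/|β_d|²) k^{m−d+3} M_EL(k) + 2d C₂ c_p^{−1} k^{−1}, where (Tr σ)^(γ) = ∫_{B₁} Tr σ(z) e^{−iγ·z} dz = Tr σ̂(γ). -/

import Mathlib

open MeasureTheory

noncomputable section

/-- `ℝ^d` with the Euclidean structure. -/
abbrev EdE (d : ℕ) := EuclideanSpace ℝ (Fin d)

/-- `|β_d|² = 1/(8π)` for `d = 2` and `1/(16π²)` otherwise (`d = 3`). -/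
def betaSq (d : ℕ) : ℝ := if d = 2 then 1 / (8 * Real.pi) else 1 / (16 * Real.pi ^ 2)

/-- Frobenius norm of a `d×d` complex matrix. -/
def frobCd {d : ℕ} (A : Matrix (Fin d) (Fin d) ℂ) : ℝ :=
  Real.sqrt (∑ i, ∑ j, ‖A i j‖ ^ 2)

/-- The rank-one complex matrix `x ŷᵀ`, i.e. `(x yᵀ)_{ij} = x_i y_j`. -/
def outerC {d : ℕ} (x y : EdE d) : Matrix (Fin d) (Fin d) ℂ :=
  Matrix.of fun i j => (x i : ℂ) * (y j : ℂ)

/-- Entrywise Fourier transform `σ̂(γ) = ∫_{ℝ^d} σ(z) e^{−iγ·z} dz` of the matrix-valued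
strength. -/
def matHatD {d : ℕ} (σ : EdE d → Matrix (Fin d) (Fin d) ℝ) (γ : EdE d) :
    Matrix (Fin d) (Fin d) ℂ :=
  Matrix.of fun i j => ∫ z, (σ z i j : ℂ) * Complex.exp (-Complex.I * ((inner ℝ γ z : ℝ) : ℂ))

/-- Entrywise integral `∫_{B₁} r(z,ξ) e^{−iγ·z} dz` of the residual. -/
def rIntD {d : ℕ} (r : EdE d → EdE d → Matrix (Fin d) (Fin d) ℂ) (ξ γ : EdE d) :
    Matrix (Fin d) (Fin d) ℂ :=
  Matrix.of fun i j =>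
    ∫ z in Metric.ball (0 : EdE d) 1,
      r z ξ i j * Complex.exp (-Complex.I * ((inner ℝ γ z : ℝ) : ℂ))

/-- Correlation of the compressional far-field patterns of the stochastic elastic wave
equation. -/
def Fp (d : ℕ) (m cp : ℝ) (σ : EdE d → Matrix (Fin d) (Fin d) ℝ)
    (r : EdE d → EdE d → Matrix (Fin d) (Fin d) ℂ) (k : ℝ) (x y : EdE d) : ℝ :=
  betaSq d * frobCd
    (((cp ^ ((d : ℝ) + 2 - m) * k ^ ((d : ℝ) - 3 - m) : ℝ) : ℂ) •
        (outerC x x * matHatD σ ((cp * k) • (x + y)) * outerC y y) +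
      ((cp ^ ((d : ℝ) + 2) * k ^ ((d : ℝ) - 3) : ℝ) : ℂ) •
        (outerC x x * rIntD r (-((cp * k) • y)) ((cp * k) • (x + y)) * outerC y y))

/-- Correlation of the shear far-field patterns of the stochastic elastic wave
equation. -/
def Fs (d : ℕ) (m cs : ℝ) (σ : EdE d → Matrix (Fin d) (Fin d) ℝ)
    (r : EdE d → EdE d → Matrix (Fin d) (Fin d) ℂ) (k : ℝ) (x y : EdE d) : ℝ :=
  betaSq d * frobCd
    (((cs ^ ((d : ℝ) + 2 - m) * k ^ ((d : ℝ) - 3 - m) : ℝ) : ℂ) •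
        ((1 - outerC x x) * matHatD σ ((cs * k) • (x + y)) * (1 - outerC y y)) +
      ((cs ^ ((d : ℝ) + 2) * k ^ ((d : ℝ) - 3) : ℝ) : ℂ) •
        ((1 - outerC x x) * rIntD r (-((cs * k) • y)) ((cs * k) • (x + y)) * (1 - outerC y y)))

/-- `M_EL(k) = max{ sup_{x̂,ŷ} F_p(x̂,ŷ,k), sup_{x̂,ŷ} F_s(x̂,ŷ,k) }`. -/
def MEL (d : ℕ) (m cp cs : ℝ) (σ : EdE d → Matrix (Fin d) (Fin d) ℝ)
    (r : EdE d → EdE d → Matrix (Fin d) (Fin d) ℂ) (k : ℝ) : ℝ :=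
  max (sSup {v : ℝ | ∃ x y : EdE d, ‖x‖ = 1 ∧ ‖y‖ = 1 ∧ v = Fp d m cp σ r k x y})
    (sSup {v : ℝ | ∃ x y : EdE d, ‖x‖ = 1 ∧ ‖y‖ = 1 ∧ v = Fs d m cs σ r k x y})

end

/-!
For unit vectors `x̂ = eᵢ`, `ŷ = -eᵢ` the probing frequency `k_p (x̂ + ŷ)` vanishes and both
rank-one projections select the `(i, i)` entry, so `F_p(eᵢ, -eᵢ, k)` is `|β_d|²` times
`|c_p^{d+2-m} k^{d-3-m} ∫ σᵢᵢ + c_p^{d+2} k^{d-3} Rᵢᵢ|`, with `|Rᵢᵢ| ≤ C₂ (c_p k)^{-m-1}` by the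
decay of `r`. Since `F_p(eᵢ, -eᵢ, k) ≤ M_EL(k)`, the triangle inequality bounds every `∫ σᵢᵢ`, and
positive semidefiniteness gives `|Tr σ̂(γ)| ≤ ∑ᵢ ∫ σᵢᵢ` for every `γ`.
-/

namespace ElasticFarField

lemma le_of_norm_ofReal_mul_add_le {a b s M E : ℝ} {t : ℂ} (ha : 0 < a) (hb : 0 ≤ b)
    (hM : ‖((a * s : ℝ) : ℂ) + (b : ℂ) * t‖ ≤ M) (hE : ‖t‖ ≤ E) :
    s ≤ a⁻¹ * M + a⁻¹ * b * E := by
  have hs : a * s ≤ M + b * E := calc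
    a * s ≤ ‖((a * s : ℝ) : ℂ)‖ := by rw [Complex.norm_real]; exact Real.le_norm_self _
    _ ≤ ‖((a * s : ℝ) : ℂ) + (b : ℂ) * t‖ + ‖(b : ℂ) * t‖ := norm_le_add_norm_add _ _
    _ ≤ M + b * E := by
      rw [norm_mul, Complex.norm_real, Real.norm_of_nonneg hb]; gcongr
  rw [mul_assoc, ← mul_add, le_inv_mul_iff₀ ha]
  exact hs

lemma rpow_weight_inv {cp k : ℝ} (hcp : 0 < cp) (hk : 0 < k) (d m : ℝ) :
    (cp ^ (d + 2 - m) * k ^ (d - 3 - m))⁻¹ = cp ^ (m - d - 2) * k ^ (m - d + 3) := by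
  rw [mul_inv, ← Real.rpow_neg hcp.le, ← Real.rpow_neg hk.le]
  ring_nf

lemma rpow_weight_ratio {cp k : ℝ} (hcp : 0 < cp) (hk : 0 < k) (d m : ℝ) :
    cp ^ (m - d - 2) * k ^ (m - d + 3) * (cp ^ (d + 2) * k ^ (d - 3)) * (cp * k) ^ (-(m + 1)) =
      cp⁻¹ * k⁻¹ := by
  rw [Real.mul_rpow hcp.le hk.le,
    show cp ^ (m - d - 2) * k ^ (m - d + 3) * (cp ^ (d + 2) * k ^ (d - 3)) *
        (cp ^ (-(m + 1)) * k ^ (-(m + 1))) =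
      cp ^ (m - d - 2) * cp ^ (d + 2) * cp ^ (-(m + 1)) *
        (k ^ (m - d + 3) * k ^ (d - 3) * k ^ (-(m + 1))) by ring,
    ← Real.rpow_add hcp, ← Real.rpow_add hcp, ← Real.rpow_add hk, ← Real.rpow_add hk,
    show m - d - 2 + (d + 2) + -(m + 1) = -1 by ring,
    show m - d + 3 + (d - 3) + -(m + 1) = -1 by ring, Real.rpow_neg_one, Real.rpow_neg_one]

variable {d : ℕ}

def bilinC (x : EdE d) (A : Matrix (Fin d) (Fin d) ℂ) (y : EdE d) : ℂ :=
  ∑ c, ∑ e, (x c : ℂ) * A c e * (y e : ℂ)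

lemma outerC_mul_mul_outerC (x y : EdE d) (A : Matrix (Fin d) (Fin d) ℂ) :
    outerC x x * A * outerC y y = bilinC x A y • outerC x y := by
  ext a b
  simp only [Matrix.mul_apply, outerC, bilinC, Matrix.of_apply, Matrix.smul_apply, smul_eq_mul,
    Finset.sum_mul]
  rw [Finset.sum_comm]
  refine Finset.sum_congr rfl fun c _ => Finset.sum_congr rfl fun e _ => ?_
  ring

lemma norm_bilinC_le (x y : EdE d) (A : Matrix (Fin d) (Fin d) ℂ) :
    ‖bilinC x A y‖ ≤ ‖x‖ * ‖y‖ * ∑ c, ∑ e, ‖A c e‖ := by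
  rw [Finset.mul_sum]
  refine (norm_sum_le _ _).trans (Finset.sum_le_sum fun c _ => ?_)
  rw [Finset.mul_sum]
  refine (norm_sum_le _ _).trans (Finset.sum_le_sum fun e _ => ?_)
  rw [norm_mul, norm_mul, Complex.norm_real, Complex.norm_real]
  have hx := PiLp.norm_apply_le x c
  have hy := PiLp.norm_apply_le y e
  have hA := norm_nonneg (A c e)
  calc ‖x c‖ * ‖A c e‖ * ‖y e‖ ≤ ‖x‖ * ‖A c e‖ * ‖y‖ := by gcongr
    _ = ‖x‖ * ‖y‖ * ‖A c e‖ := by ring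

lemma bilinC_single_neg_single (i : Fin d) (A : Matrix (Fin d) (Fin d) ℂ) :
    bilinC (EuclideanSpace.single i 1) A (-EuclideanSpace.single i 1) = -A i i := by
  simp [bilinC, apply_ite]

lemma frobCd_smul (c : ℂ) (A : Matrix (Fin d) (Fin d) ℂ) : frobCd (c • A) = ‖c‖ * frobCd A := by
  simp only [frobCd, Matrix.smul_apply, smul_eq_mul, norm_mul, mul_pow, ← Finset.mul_sum]
  rw [Real.sqrt_mul (sq_nonneg _), Real.sqrt_sq (norm_nonneg _)]

lemma frobCd_outerC (x y : EdE d) : frobCd (outerC x y) = ‖x‖ * ‖y‖ := by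
  simp only [frobCd, outerC, Matrix.of_apply, norm_mul, Complex.norm_real, mul_pow,
    ← Finset.mul_sum, ← Finset.sum_mul, ← EuclideanSpace.norm_sq_eq]
  rw [← mul_pow, Real.sqrt_sq (by positivity)]

lemma norm_apply_le_frobCd (A : Matrix (Fin d) (Fin d) ℂ) (i j : Fin d) : ‖A i j‖ ≤ frobCd A := by
  refine Real.le_sqrt_of_sq_le ?_
  calc ‖A i j‖ ^ 2 ≤ ∑ b, ‖A i b‖ ^ 2 :=
        Finset.single_le_sum (f := fun b => ‖A i b‖ ^ 2) (fun _ _ => by positivity)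
          (Finset.mem_univ j)
    _ ≤ ∑ a, ∑ b, ‖A a b‖ ^ 2 :=
        Finset.single_le_sum (f := fun a => ∑ b, ‖A a b‖ ^ 2) (fun _ _ => by positivity)
          (Finset.mem_univ i)

lemma frobCd_le_sum_norm (A : Matrix (Fin d) (Fin d) ℂ) : frobCd A ≤ ∑ i, ∑ j, ‖A i j‖ := by
  refine Real.sqrt_le_iff.mpr ⟨by positivity, ?_⟩
  calc ∑ i, ∑ j, ‖A i j‖ ^ 2 ≤ ∑ i, (∑ j, ‖A i j‖) ^ 2 :=
        Finset.sum_le_sum fun i _ => Finset.sum_sq_le_sq_sum_of_nonneg fun _ _ => norm_nonneg _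
    _ ≤ (∑ i, ∑ j, ‖A i j‖) ^ 2 :=
        Finset.sum_sq_le_sq_sum_of_nonneg fun _ _ => by positivity

lemma continuous_frobCd : Continuous (frobCd (d := d)) := by
  unfold frobCd; fun_prop

lemma integrable_frobCd {μ : Measure (EdE d)} {A : EdE d → Matrix (Fin d) (Fin d) ℂ}
    (hA : ∀ i j, Integrable (fun z => A z i j) μ) : Integrable (fun z => frobCd (A z)) μ := by
  refine Integrable.mono' (g := fun z => ∑ i, ∑ j, ‖A z i j‖)
    (integrable_finsetSum _ fun i _ => integrable_finsetSum _ fun j _ => (hA i j).norm)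
    (continuous_frobCd.comp_aestronglyMeasurable ?_) (ae_of_all _ fun z => ?_)
  · exact (Integrable.of_eval fun i => Integrable.of_eval (hA i)).aestronglyMeasurable
  · rw [Real.norm_of_nonneg (by unfold frobCd; positivity)]
    exact frobCd_le_sum_norm _

lemma norm_fourierKernel (γ z : EdE d) :
    ‖Complex.exp (-Complex.I * ((inner ℝ γ z : ℝ) : ℂ))‖ = 1 := by
  rw [Complex.norm_exp]; simp

lemma norm_matHatD_apply_le (σ : EdE d → Matrix (Fin d) (Fin d) ℝ) (γ : EdE d) (i j : Fin d) :
    ‖matHatD σ γ i j‖ ≤ ∫ z, |σ z i j| := by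
  refine (norm_integral_le_integral_norm _).trans_eq ?_
  simp_rw [norm_mul, norm_fourierKernel, mul_one, Complex.norm_real, Real.norm_eq_abs]

lemma matHatD_zero_apply (σ : EdE d → Matrix (Fin d) (Fin d) ℝ) (i j : Fin d) :
    matHatD σ 0 i j = ((∫ z, σ z i j : ℝ) : ℂ) := by
  simp [matHatD, integral_complex_ofReal]

lemma norm_trace_matHatD_le {σ : EdE d → Matrix (Fin d) (Fin d) ℝ}
    (hσ : ∀ z i, 0 ≤ σ z i i) (γ : EdE d) :
    ‖(matHatD σ γ).trace‖ ≤ ∑ i, ∫ z, σ z i i :=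
  (norm_sum_le _ _).trans <| Finset.sum_le_sum fun i _ =>
    (norm_matHatD_apply_le σ γ i i).trans_eq <| integral_congr_ae <|
      ae_of_all _ fun z => abs_of_nonneg (hσ z i)

lemma norm_rIntD_apply_le {r : EdE d → EdE d → Matrix (Fin d) (Fin d) ℂ} {ξ : EdE d}
    (hr : ∀ i j, Integrable (fun z => r z ξ i j)) (γ : EdE d) (i j : Fin d) :
    ‖rIntD r ξ γ i j‖ ≤ ∫ z in Metric.ball (0 : EdE d) 1, frobCd (r z ξ) := by
  refine (norm_integral_le_integral_norm _).trans (integral_mono_of_nonneg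
    (ae_of_all _ fun _ => norm_nonneg _)
    (integrable_frobCd fun i j => (hr i j).integrableOn) (ae_of_all _ fun z => ?_))
  simpa only [norm_mul, norm_fourierKernel, mul_one] using norm_apply_le_frobCd (r z ξ) i j

lemma norm_single_one (i : Fin d) : ‖(EuclideanSpace.single i 1 : EdE d)‖ = 1 := by
  simp

lemma betaSq_pos (d : ℕ) : 0 < betaSq d := by
  unfold betaSq; split <;> positivity

section FarField

variable {m C₂ cp cs k : ℝ} {σ : EdE d → Matrix (Fin d) (Fin d) ℝ}
  {r : EdE d → EdE d → Matrix (Fin d) (Fin d) ℂ}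

lemma Fp_eq (x y : EdE d) :
    Fp d m cp σ r k x y = betaSq d * ‖x‖ * ‖y‖ *
      ‖((cp ^ ((d : ℝ) + 2 - m) * k ^ ((d : ℝ) - 3 - m) : ℝ) : ℂ) *
          bilinC x (matHatD σ ((cp * k) • (x + y))) y +
        ((cp ^ ((d : ℝ) + 2) * k ^ ((d : ℝ) - 3) : ℝ) : ℂ) *
          bilinC x (rIntD r (-((cp * k) • y)) ((cp * k) • (x + y))) y‖ := by
  rw [Fp, outerC_mul_mul_outerC, outerC_mul_mul_outerC, smul_smul, smul_smul, ← add_smul,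
    frobCd_smul, frobCd_outerC]
  ring

/-- `MEL` is built from `sSup`, which is `0` on sets that are not bounded above; this is what
makes `Fp_le_MEL` applicable. -/
lemma bddAbove_Fp {B : ℝ} (hr_int : ∀ ξ i j, Integrable (fun z => r z ξ i j))
    (hB : ∀ y : EdE d, ‖y‖ = 1 →
      ∫ z in Metric.ball (0 : EdE d) 1, frobCd (r z (-((cp * k) • y))) ≤ B) :
    BddAbove {v : ℝ | ∃ x y : EdE d, ‖x‖ = 1 ∧ ‖y‖ = 1 ∧ v = Fp d m cp σ r k x y} := by
  refine ⟨betaSq d * (|cp ^ ((d : ℝ) + 2 - m) * k ^ ((d : ℝ) - 3 - m)| *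
      (∑ c, ∑ e, ∫ z, |σ z c e|) +
        |cp ^ ((d : ℝ) + 2) * k ^ ((d : ℝ) - 3)| * ∑ _c : Fin d, ∑ _e : Fin d, B),
    ?_⟩
  rintro _ ⟨x, y, hx, hy, rfl⟩
  rw [Fp_eq, hx, hy, mul_one, mul_one]
  have hσ : ‖bilinC x (matHatD σ ((cp * k) • (x + y))) y‖ ≤ ∑ c, ∑ e, ∫ z, |σ z c e| := by
    grw [norm_bilinC_le, hx, hy, one_mul, one_mul]
    gcongr with c _ e _
    exact norm_matHatD_apply_le σ _ c e
  have hr : ‖bilinC x (rIntD r (-((cp * k) • y)) ((cp * k) • (x + y))) y‖ ≤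
      ∑ _c : Fin d, ∑ _e : Fin d, B := by
    grw [norm_bilinC_le, hx, hy, one_mul, one_mul]
    gcongr with c _ e _
    exact (norm_rIntD_apply_le (hr_int _) _ c e).trans (hB y hy)
  refine mul_le_mul_of_nonneg_left ((norm_add_le _ _).trans ?_) (betaSq_pos d).le
  rw [norm_mul, norm_mul, Complex.norm_real, Complex.norm_real, Real.norm_eq_abs, Real.norm_eq_abs]
  gcongr

lemma Fp_le_MEL (hbdd : BddAbove {v : ℝ | ∃ x y : EdE d, ‖x‖ = 1 ∧ ‖y‖ = 1 ∧
      v = Fp d m cp σ r k x y}) {x y : EdE d} (hx : ‖x‖ = 1) (hy : ‖y‖ = 1) :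
    Fp d m cp σ r k x y ≤ MEL d m cp cs σ r k :=
  (le_csSup hbdd ⟨x, y, hx, hy, rfl⟩).trans (le_max_left _ _)

lemma Fp_single_neg_single (i : Fin d) :
    Fp d m cp σ r k (EuclideanSpace.single i 1) (-EuclideanSpace.single i 1) = betaSq d *
      ‖((cp ^ ((d : ℝ) + 2 - m) * k ^ ((d : ℝ) - 3 - m) * ∫ z, σ z i i : ℝ) : ℂ) +
        ((cp ^ ((d : ℝ) + 2) * k ^ ((d : ℝ) - 3) : ℝ) : ℂ) *
          rIntD r ((cp * k) • EuclideanSpace.single i 1) 0 i i‖ := by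
  rw [Fp_eq, add_neg_cancel, smul_zero, smul_neg, neg_neg, bilinC_single_neg_single,
    bilinC_single_neg_single, matHatD_zero_apply, norm_neg, norm_single_one, mul_one, mul_one,
    ← norm_neg]
  congr 2
  push_cast
  ring

lemma integral_diag_le_MEL (hcp : 0 < cp) (hk : 0 < k)
    (hr_int : ∀ ξ i j, Integrable (fun z => r z ξ i j))
    (hr_bd : ∀ ξ : EdE d, ‖ξ‖ = cp * k →
      ∫ z in Metric.ball (0 : EdE d) 1, frobCd (r z ξ) ≤ C₂ * (cp * k) ^ (-(m + 1)))
    (i : Fin d) :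
    ∫ z, σ z i i ≤
      cp ^ (m - d - 2) / betaSq d * k ^ (m - d + 3) * MEL d m cp cs σ r k + C₂ * cp⁻¹ * k⁻¹ := by
  have hcpk : 0 < cp * k := mul_pos hcp hk
  have hbdd := bddAbove_Fp (m := m) (σ := σ) hr_int fun y hy => hr_bd _ <| by
    rw [norm_neg, norm_smul, hy, mul_one, Real.norm_of_nonneg hcpk.le]
  have hF := Fp_le_MEL (cs := cs) hbdd (norm_single_one i) ((norm_neg _).trans (norm_single_one i))
  rw [Fp_single_neg_single, ← le_div_iff₀' (betaSq_pos d)] at hF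
  have hR := (norm_rIntD_apply_le (hr_int ((cp * k) • EuclideanSpace.single i 1)) 0 i i).trans
    (hr_bd _ (by rw [norm_smul, norm_single_one, mul_one, Real.norm_of_nonneg hcpk.le]))
  refine (le_of_norm_ofReal_mul_add_le (by positivity) (by positivity) hF hR).trans_eq ?_
  rw [rpow_weight_inv hcp hk, mul_left_comm _ C₂, rpow_weight_ratio hcp hk]
  ring

end FarField

end ElasticFarField

theorem statement10_general (d : ℕ) (m C₂ : ℝ)
    (cp cs : ℝ)
    (σ : EdE d → Matrix (Fin d) (Fin d) ℝ)
    (hσ_psd : ∀ z, (σ z).IsSymm ∧ (σ z).PosSemidef)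
    (r : EdE d → EdE d → Matrix (Fin d) (Fin d) ℂ)
    (hr_int : ∀ ξ i j, Integrable (fun z => r z ξ i j))
    (hr_bd : ∀ ξ : EdE d, 1 < ‖ξ‖ →
      (∫ z in Metric.ball (0 : EdE d) 1, frobCd (r z ξ)) ≤ C₂ * ‖ξ‖ ^ (-(m + 1)))
    (k : ℝ) (hk : 0 < k) (hkp : 1 < cp * k) (γ : EdE d) :
    ‖(matHatD σ γ).trace‖ ≤
      2 * (d : ℝ) * cp ^ (m - (d : ℝ) - 2) / betaSq d * k ^ (m - (d : ℝ) + 3) *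
        MEL d m cp cs σ r k + 2 * (d : ℝ) * C₂ * cp⁻¹ * k⁻¹ := by
  have hcp : 0 < cp := (pos_iff_pos_of_mul_pos (one_pos.trans hkp)).mpr hk
  have hdiag : ∀ z i, 0 ≤ σ z i i := fun z _ => (hσ_psd z).2.diag_nonneg
  have hbound := ElasticFarField.integral_diag_le_MEL (cs := cs) (σ := σ) hcp hk hr_int
    fun ξ hξ => hξ ▸ hr_bd ξ (hξ ▸ hkp)
  calc ‖(matHatD σ γ).trace‖ ≤ ∑ i, ∫ z, σ z i i := ElasticFarField.norm_trace_matHatD_le hdiag γ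
    _ ≤ ∑ _i : Fin d, 2 * (cp ^ (m - d - 2) / betaSq d * k ^ (m - d + 3) *
          MEL d m cp cs σ r k + C₂ * cp⁻¹ * k⁻¹) :=
      Finset.sum_le_sum fun i _ => by
        have : 0 ≤ ∫ z, σ z i i := integral_nonneg fun z => hdiag z i
        linarith [hbound i]
    _ = _ := by simp only [Finset.sum_const, Finset.card_univ, Fintype.card_fin, nsmul_eq_mul]; ring

/-- For every `k > 0` with `k_p = c_p k > 1` and every `γ ∈ ℝ^d` with
`|γ| ≤ k_p`, the Fourier coefficient of the trace of the strength satisfies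
`|(Tr σ)^(γ)| ≤ (2d c_p^{m−d−2}/|β_d|²) k^{m−d+3} M_EL(k) + 2d C₂ c_p⁻¹ k⁻¹`, where
`(Tr σ)^(γ) = Tr σ̂(γ)`. -/
theorem statement10 (d : ℕ) (hd : d = 2 ∨ d = 3) (m C₂ μ lam : ℝ)
    (hm : (d : ℝ) - 2 < m ∧ m ≤ (d : ℝ)) (hC₂ : 0 < C₂) (hμ : 0 < μ) (hlam : 0 < lam + μ)
    (cp cs : ℝ) (hcp : cp = (lam + 2 * μ) ^ (-(1 / 2 : ℝ))) (hcs : cs = μ ^ (-(1 / 2 : ℝ)))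
    (σ : EdE d → Matrix (Fin d) (Fin d) ℝ)
    (hσ_int : ∀ i j, Integrable (fun z => σ z i j))
    (hσ_supp : ∀ z ∉ Metric.ball (0 : EdE d) 1, σ z = 0)
    (hσ_psd : ∀ z, (σ z).IsSymm ∧ (σ z).PosSemidef)
    (r : EdE d → EdE d → Matrix (Fin d) (Fin d) ℂ)
    (hr_int : ∀ ξ i j, Integrable (fun z => r z ξ i j))
    (hr_supp : ∀ ξ : EdE d, ∀ z ∉ Metric.ball (0 : EdE d) 1, r z ξ = 0)
    (hr_bd : ∀ ξ : EdE d, 1 < ‖ξ‖ →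
      (∫ z in Metric.ball (0 : EdE d) 1, frobCd (r z ξ)) ≤ C₂ * ‖ξ‖ ^ (-(m + 1)))
    (k : ℝ) (hk : 0 < k) (hkp : 1 < cp * k) (γ : EdE d) (hγ : ‖γ‖ ≤ cp * k) :
    ‖(matHatD σ γ).trace‖ ≤
      2 * (d : ℝ) * cp ^ (m - (d : ℝ) - 2) / betaSq d * k ^ (m - (d : ℝ) + 3) *
        MEL d m cp cs σ r k + 2 * (d : ℝ) * C₂ * cp⁻¹ * k⁻¹ :=
  statement10_general d m C₂ cp cs σ hσ_psd r hr_int hr_bd k hk hkp γ
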